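/- Let Θ be a Hermitian form on the tensor product C^n ⊗ C^n, i.e. a sesquilinear form Q(τ⊗ξ, τ⊗ξ) that is real-valued on diagonal elements. Suppose Q(τ⊗ξ, τ⊗ξ) ≥ 0 whenever τ is orthogonal to ξ (with respect to the standard Hermitian inner product). Let μ := sup over unit vectors τ, ξ of |Q(τ⊗ξ, τ⊗ξ)|. Then for every w > 0 and all vectors τ, ξ ∈ C^n: Q(τ⊗ξ, τ⊗ξ) + (1/w²)|⟨τ,ξ⟩|² + 5μ√μ · w · ‖τ‖² ‖ξ‖² ≥ 0. -/

import Mathlib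

/-!
Write `q τ ξ = Re Q(τ ⊗ ξ, τ ⊗ ξ)`; by homogeneity `|q τ ξ| ≤ μ ‖τ‖² ‖ξ‖²`, and polarization with
the parallelogram law turns this into `|Re Q(τ ⊗ σ, τ ⊗ η)| ≤ μ ‖τ‖² ‖σ‖ ‖η‖`. Splitting `ξ = p + η`
with `p ∈ ℂ τ` and `η ⊥ τ` gives `q τ ξ = q τ p + q τ η + 2 Re Q(τ ⊗ p, τ ⊗ η)`, where `q τ η ≥ 0`
by hypothesis; as `‖τ‖ ‖p‖ = |⟪ξ, τ⟫|` and `‖p‖, ‖η‖ ≤ ‖ξ‖`, the other two terms add up to at least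
`-3μ t N` with `t = |⟪ξ, τ⟫| ≤ N = ‖τ‖ ‖ξ‖`. Finally `3μ t N ≤ t² / w² + 5 μ √μ w N²` is AM-GM when
`√μ w ≤ 20/9` and immediate otherwise.
-/

open scoped TensorProduct ComplexConjugate

lemma IsLUB.nonneg_of_forall_nonneg {S : Set ℝ} {a : ℝ} (h : IsLUB S a) (hS : ∀ r ∈ S, 0 ≤ r) :
    0 ≤ a := by
  rcases S.eq_empty_or_nonempty with rfl | ⟨r, hr⟩
  · exact absurd (isLUB_empty_iff.mp h) (not_isBot a)
  · exact (hS r hr).trans (h.1 hr)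

lemma three_mul_le_sq_div_sq_add {μ w t N : ℝ} (hμ : 0 ≤ μ) (hw : 0 < w) (ht : 0 ≤ t)
    (htN : t ≤ N) :
    3 * μ * t * N ≤ t ^ 2 / w ^ 2 + 5 * μ * √μ * w * N ^ 2 := by
  obtain ⟨s, hs, rfl⟩ : ∃ s, 0 ≤ s ∧ μ = s ^ 2 := ⟨√μ, Real.sqrt_nonneg μ, (Real.sq_sqrt hμ).symm⟩
  rw [Real.sqrt_sq hs]
  have hN : 0 ≤ N := ht.trans htN
  rw [div_add' _ _ _ (by positivity), le_div_iff₀ (by positivity)]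
  rcases le_or_gt (s * w) (20 / 9) with h | h
  · -- AM-GM: `3 s² t N w² ≤ t² + (9/4) s⁴ w⁴ N²`
    have : 9 / 4 * s ^ 4 * w ^ 4 * N ^ 2 ≤ 5 * s ^ 3 * w ^ 3 * N ^ 2 := by
      nlinarith [mul_le_mul_of_nonneg_left h (by positivity : (0:ℝ) ≤ 9 / 4 * s ^ 3 * w ^ 3 * N ^ 2)]
    nlinarith [sq_nonneg (t - 3 / 2 * s ^ 2 * w ^ 2 * N)]
  · nlinarith [mul_le_mul_of_nonneg_left htN (by positivity : (0:ℝ) ≤ 3 * s ^ 2 * N * w ^ 2),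
      mul_le_mul_of_nonneg_left h.le (by positivity : (0:ℝ) ≤ 5 * s ^ 2 * w ^ 2 * N ^ 2)]

section HermitianForm

variable {M : Type*} [AddCommGroup M] [Module ℂ M] {Q : M →ₗ[ℂ] M →ₛₗ[starRingEnd ℂ] ℂ}

lemma re_apply_comm_of_hermitian (hQ : ∀ x y, Q x y = conj (Q y x)) (x y : M) :
    (Q y x).re = (Q x y).re := by
  rw [hQ y x, Complex.conj_re]

lemma re_apply_add_add (hQ : ∀ x y, Q x y = conj (Q y x)) (x y : M) :
    (Q (x + y) (x + y)).re = (Q x x).re + (Q y y).re + 2 * (Q x y).re := by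
  simp only [map_add, LinearMap.add_apply, Complex.add_re, re_apply_comm_of_hermitian hQ x y]
  ring

lemma re_apply_sub_sub (hQ : ∀ x y, Q x y = conj (Q y x)) (x y : M) :
    (Q (x - y) (x - y)).re = (Q x x).re + (Q y y).re - 2 * (Q x y).re := by
  simp only [map_sub, LinearMap.sub_apply, Complex.sub_re, re_apply_comm_of_hermitian hQ x y]
  ring

lemma apply_smul_smul (c d : ℂ) (x y : M) : Q (c • x) (d • y) = c * conj d * Q x y := by
  rw [LinearMap.map_smulₛₗ (Q (c • x)), map_smul, LinearMap.smul_apply, smul_eq_mul, smul_eq_mul]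
  ring

lemma re_apply_smul_smul (c : ℂ) (x : M) : (Q (c • x) (c • x)).re = ‖c‖ ^ 2 * (Q x x).re := by
  rw [apply_smul_smul, Complex.mul_conj', ← Complex.ofReal_pow, Complex.re_ofReal_mul]

end HermitianForm

section DecomposableTensors

variable {E F : Type*} [NormedAddCommGroup E] [InnerProductSpace ℂ E]
  [NormedAddCommGroup F] [InnerProductSpace ℂ F]
  {Q : E ⊗[ℂ] F →ₗ[ℂ] E ⊗[ℂ] F →ₛₗ[starRingEnd ℂ] ℂ} {μ : ℝ}

lemma re_apply_smul_tmul_smul (c d : ℂ) (τ : E) (ξ : F) :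
    (Q ((c • τ) ⊗ₜ (d • ξ)) ((c • τ) ⊗ₜ (d • ξ))).re
      = ‖c‖ ^ 2 * ‖d‖ ^ 2 * (Q (τ ⊗ₜ ξ) (τ ⊗ₜ ξ)).re := by
  rw [TensorProduct.smul_tmul_smul, re_apply_smul_smul, norm_mul, mul_pow]

lemma abs_re_apply_tmul_le
    (hμ : ∀ (τ : E) (ξ : F), ‖τ‖ = 1 → ‖ξ‖ = 1 → |(Q (τ ⊗ₜ ξ) (τ ⊗ₜ ξ)).re| ≤ μ)
    (τ : E) (ξ : F) : |(Q (τ ⊗ₜ ξ) (τ ⊗ₜ ξ)).re| ≤ μ * ‖τ‖ ^ 2 * ‖ξ‖ ^ 2 := by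
  rcases eq_or_ne τ 0 with rfl | hτ
  · simp
  rcases eq_or_ne ξ 0 with rfl | hξ
  · simp
  have h := hμ _ _ (norm_smul_inv_norm (𝕜 := ℂ) hτ) (norm_smul_inv_norm (𝕜 := ℂ) hξ)
  have hτ' : 0 < ‖τ‖ := norm_pos_iff.mpr hτ
  have hξ' : 0 < ‖ξ‖ := norm_pos_iff.mpr hξ
  simp only [re_apply_smul_tmul_smul, norm_inv, RCLike.norm_ofReal, abs_norm] at h
  rw [abs_mul, abs_of_nonneg (by positivity), inv_pow,
    inv_pow, ← mul_inv, inv_mul_le_iff₀ (by positivity)] at h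
  linarith

lemma two_mul_abs_re_apply_tmul_tmul_le (hQ : ∀ x y, Q x y = conj (Q y x))
    (hμ : ∀ (τ : E) (ξ : F), |(Q (τ ⊗ₜ ξ) (τ ⊗ₜ ξ)).re| ≤ μ * ‖τ‖ ^ 2 * ‖ξ‖ ^ 2)
    (τ : E) (σ η : F) :
    2 * |(Q (τ ⊗ₜ σ) (τ ⊗ₜ η)).re| ≤ μ * ‖τ‖ ^ 2 * (‖σ‖ ^ 2 + ‖η‖ ^ 2) := by
  have hpol : 4 * (Q (τ ⊗ₜ σ) (τ ⊗ₜ η)).re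
      = (Q (τ ⊗ₜ (σ + η)) (τ ⊗ₜ (σ + η))).re - (Q (τ ⊗ₜ (σ - η)) (τ ⊗ₜ (σ - η))).re := by
    rw [TensorProduct.tmul_add, TensorProduct.tmul_sub, re_apply_add_add hQ, re_apply_sub_sub hQ]
    ring
  have := calc
    4 * |(Q (τ ⊗ₜ σ) (τ ⊗ₜ η)).re|
      = |(Q (τ ⊗ₜ (σ + η)) (τ ⊗ₜ (σ + η))).re - (Q (τ ⊗ₜ (σ - η)) (τ ⊗ₜ (σ - η))).re| := by
        rw [← hpol, abs_mul, abs_of_pos (by norm_num : (0:ℝ) < 4)]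
    _ ≤ |(Q (τ ⊗ₜ (σ + η)) (τ ⊗ₜ (σ + η))).re| + |(Q (τ ⊗ₜ (σ - η)) (τ ⊗ₜ (σ - η))).re| :=
        abs_sub _ _
    _ ≤ μ * ‖τ‖ ^ 2 * (‖σ + η‖ ^ 2 + ‖σ - η‖ ^ 2) := by
        linarith [hμ τ (σ + η), hμ τ (σ - η)]
    _ = 2 * (μ * ‖τ‖ ^ 2 * (‖σ‖ ^ 2 + ‖η‖ ^ 2)) := by
        rw [parallelogram_law_with_norm ℂ σ η]; ring
  linarith

lemma abs_re_apply_tmul_tmul_le (hQ : ∀ x y, Q x y = conj (Q y x))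
    (hμ : ∀ (τ : E) (ξ : F), |(Q (τ ⊗ₜ ξ) (τ ⊗ₜ ξ)).re| ≤ μ * ‖τ‖ ^ 2 * ‖ξ‖ ^ 2)
    (τ : E) (σ η : F) :
    |(Q (τ ⊗ₜ σ) (τ ⊗ₜ η)).re| ≤ μ * ‖τ‖ ^ 2 * ‖σ‖ * ‖η‖ := by
  rcases eq_or_ne σ 0 with rfl | hσ
  · simp
  rcases eq_or_ne η 0 with rfl | hη
  · simp
  have hσ' : 0 < ‖σ‖ := norm_pos_iff.mpr hσ
  have hη' : 0 < ‖η‖ := norm_pos_iff.mpr hη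
  -- rescaling `σ` and `η` to the same length makes the parallelogram bound sharp
  have h := two_mul_abs_re_apply_tmul_tmul_le hQ hμ τ ((‖η‖ : ℂ) • σ) ((‖σ‖ : ℂ) • η)
  rw [TensorProduct.tmul_smul, TensorProduct.tmul_smul, apply_smul_smul, Complex.conj_ofReal,
    ← Complex.ofReal_mul, Complex.re_ofReal_mul, abs_mul, abs_of_nonneg (by positivity),
    norm_smul, norm_smul, Complex.norm_real, Complex.norm_real, norm_norm, norm_norm] at h
  have : 0 < ‖η‖ * ‖σ‖ := by positivity
  nlinarith [mul_pos this this]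

end DecomposableTensors

section OrthogonalDecomposition

variable {E : Type*} [NormedAddCommGroup E] [InnerProductSpace ℂ E]
  {Q : E ⊗[ℂ] E →ₗ[ℂ] E ⊗[ℂ] E →ₛₗ[starRingEnd ℂ] ℂ} {μ : ℝ}

lemma neg_three_mul_le_re_apply_tmul (hQ : ∀ x y, Q x y = conj (Q y x))
    (horth : ∀ τ ξ : E, (inner ℂ ξ τ : ℂ) = 0 → 0 ≤ (Q (τ ⊗ₜ ξ) (τ ⊗ₜ ξ)).re)
    (hμ0 : 0 ≤ μ) (hμ : ∀ τ ξ : E, |(Q (τ ⊗ₜ ξ) (τ ⊗ₜ ξ)).re| ≤ μ * ‖τ‖ ^ 2 * ‖ξ‖ ^ 2)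
    (τ ξ : E) :
    -(3 * μ * ‖(inner ℂ ξ τ : ℂ)‖ * (‖τ‖ * ‖ξ‖)) ≤ (Q (τ ⊗ₜ ξ) (τ ⊗ₜ ξ)).re := by
  rcases eq_or_ne τ 0 with rfl | hτ
  · simp
  -- `ξ = p + η` with `p` the orthogonal projection of `ξ` on `ℂ τ`
  set p : E := (inner ℂ τ ξ / inner ℂ τ τ) • τ with hp
  set η : E := ξ - p
  have hτη : (inner ℂ τ η : ℂ) = 0 := by
    rw [inner_sub_right, hp, inner_smul_right, div_mul_cancel₀ _ (inner_self_ne_zero.mpr hτ),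
      sub_self]
  have hpη : (inner ℂ p η : ℂ) = 0 := by rw [hp, inner_smul_left, hτη, mul_zero]
  have hξ : ξ = p + η := (add_sub_cancel p ξ).symm
  have hpyth : ‖ξ‖ ^ 2 = ‖p‖ ^ 2 + ‖η‖ ^ 2 := by
    rw [hξ, sq, sq, sq, norm_add_sq_eq_norm_sq_add_norm_sq_of_inner_eq_zero p η hpη]
  have hnorm_p : ‖τ‖ * ‖p‖ = ‖(inner ℂ ξ τ : ℂ)‖ := by
    rw [hp, norm_smul, norm_div, inner_self_eq_norm_sq_to_K, norm_pow, RCLike.norm_ofReal,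
      abs_norm, norm_inner_symm]
    field_simp
  have hp_le : ‖p‖ ≤ ‖ξ‖ := by nlinarith [norm_nonneg p, norm_nonneg ξ]
  have hη_le : ‖η‖ ≤ ‖ξ‖ := by nlinarith [norm_nonneg η, norm_nonneg ξ]
  have hexpand : (Q (τ ⊗ₜ ξ) (τ ⊗ₜ ξ)).re = (Q (τ ⊗ₜ p) (τ ⊗ₜ p)).re
      + (Q (τ ⊗ₜ η) (τ ⊗ₜ η)).re + 2 * (Q (τ ⊗ₜ p) (τ ⊗ₜ η)).re := by
    conv_lhs => rw [hξ, TensorProduct.tmul_add, re_apply_add_add hQ]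
  have hητ : (inner ℂ η τ : ℂ) = 0 := by rw [← inner_conj_symm, hτη, map_zero]
  have hdiag := (abs_le.mp (hμ τ p)).1
  have hcross := (abs_le.mp (abs_re_apply_tmul_tmul_le hQ hμ τ p η)).1
  have hdiag' : μ * ‖τ‖ ^ 2 * ‖p‖ ^ 2 ≤ μ * ‖(inner ℂ ξ τ : ℂ)‖ * (‖τ‖ * ‖ξ‖) := by
    rw [← hnorm_p]
    have := mul_le_mul_of_nonneg_left hp_le (by positivity : 0 ≤ μ * ‖τ‖ ^ 2 * ‖p‖)
    nlinarith
  have hcross' : μ * ‖τ‖ ^ 2 * ‖p‖ * ‖η‖ ≤ μ * ‖(inner ℂ ξ τ : ℂ)‖ * (‖τ‖ * ‖ξ‖) := by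
    rw [← hnorm_p]
    have := mul_le_mul_of_nonneg_left hη_le (by positivity : 0 ≤ μ * ‖τ‖ ^ 2 * ‖p‖)
    nlinarith
  linarith [horth τ η hητ]

end OrthogonalDecomposition

/-- curvature lemma for Hermitian forms on `ℂⁿ ⊗ ℂⁿ`. -/
theorem stmt0 (n : ℕ)
    (Q : TensorProduct ℂ (EuclideanSpace ℂ (Fin n)) (EuclideanSpace ℂ (Fin n)) →ₗ[ℂ]
         TensorProduct ℂ (EuclideanSpace ℂ (Fin n)) (EuclideanSpace ℂ (Fin n))
           →ₛₗ[starRingEnd ℂ] ℂ)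
    (hherm : ∀ x y, Q x y = conj (Q y x))
    (horth : ∀ τ ξ : EuclideanSpace ℂ (Fin n),
      (inner ℂ ξ τ : ℂ) = 0 → 0 ≤ (Q (τ ⊗ₜ[ℂ] ξ) (τ ⊗ₜ[ℂ] ξ)).re)
    (μ : ℝ)
    (hμ : IsLUB {r : ℝ | ∃ τ ξ : EuclideanSpace ℂ (Fin n), ‖τ‖ = 1 ∧ ‖ξ‖ = 1 ∧
      r = |(Q (τ ⊗ₜ[ℂ] ξ) (τ ⊗ₜ[ℂ] ξ)).re|} μ) :
    ∀ w : ℝ, 0 < w → ∀ τ ξ : EuclideanSpace ℂ (Fin n),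
      0 ≤ (Q (τ ⊗ₜ[ℂ] ξ) (τ ⊗ₜ[ℂ] ξ)).re + (1 / w ^ 2) * ‖(inner ℂ ξ τ : ℂ)‖ ^ 2
          + 5 * μ * Real.sqrt μ * w * ‖τ‖ ^ 2 * ‖ξ‖ ^ 2 := by
  intro w hw τ ξ
  have hμ0 : 0 ≤ μ := hμ.nonneg_of_forall_nonneg (by rintro _ ⟨_, _, _, _, rfl⟩; positivity)
  have hbound := abs_re_apply_tmul_le fun τ ξ hτ hξ ↦ hμ.1 ⟨τ, ξ, hτ, hξ, rfl⟩
  have hlower := neg_three_mul_le_re_apply_tmul hherm horth hμ0 hbound τ ξ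
  have harith := three_mul_le_sq_div_sq_add hμ0 hw (norm_nonneg _)
    ((norm_inner_le_norm (𝕜 := ℂ) ξ τ).trans_eq (mul_comm ‖ξ‖ ‖τ‖))
  rw [mul_pow] at harith
  linarith [one_div_mul_eq_div (w ^ 2) (‖(inner ℂ ξ τ : ℂ)‖ ^ 2)]
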